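/- arXiv:0903.4503 — 3 statements merged into one kernel-verified Lean document; each statement's English description precedes it below -/
import Mathlib

section
/- If p, c₁, c₂, c₃ are positive integers and X₁, X₂, X₃ are integers with |Xᵢ| < cᵢp for each i, then 2Cp³ + 6pQ is a sum of six positive integer cubes, where C = c₁³+c₂³+c₃³ and Q = c₁X₁²+c₂X₂²+c₃X₃². -/
theorem add_pow_three_add_sub_pow_three {R : Type*} [CommRing R] (a x : R) :
    (a + x) ^ 3 + (a - x) ^ 3 = 2 * a ^ 3 + 6 * a * x ^ 2 := by
  ring

theorem exists_pos_cubes_sum_eq_of_abs_lt {R : Type*} [CommRing R] [LinearOrder R]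
    [IsStrictOrderedRing R] {a x : R} (h : |x| < a) :
    ∃ m n : R, 0 < m ∧ 0 < n ∧ m ^ 3 + n ^ 3 = 2 * a ^ 3 + 6 * a * x ^ 2 := by
  obtain ⟨hlt, hgt⟩ := abs_lt.mp h
  exact ⟨a + x, a - x, by linarith, by linarith, add_pow_three_add_sub_pow_three a x⟩

theorem sum_six_pos_cubes_general (p c₁ c₂ c₃ : ℤ) (X₁ X₂ X₃ : ℤ)
    (h₁ : |X₁| < c₁ * p) (h₂ : |X₂| < c₂ * p) (h₃ : |X₃| < c₃ * p) :
    ∃ n₁ n₂ n₃ n₄ n₅ n₆ : ℤ, 0 < n₁ ∧ 0 < n₂ ∧ 0 < n₃ ∧ 0 < n₄ ∧ 0 < n₅ ∧ 0 < n₆ ∧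
      n₁^3 + n₂^3 + n₃^3 + n₄^3 + n₅^3 + n₆^3 =
        2 * (c₁^3 + c₂^3 + c₃^3) * p^3 + 6 * p * (c₁*X₁^2 + c₂*X₂^2 + c₃*X₃^2) := by
  obtain ⟨n₁, n₂, hn₁, hn₂, e₁⟩ := exists_pos_cubes_sum_eq_of_abs_lt h₁
  obtain ⟨n₃, n₄, hn₃, hn₄, e₂⟩ := exists_pos_cubes_sum_eq_of_abs_lt h₂
  obtain ⟨n₅, n₆, hn₅, hn₆, e₃⟩ := exists_pos_cubes_sum_eq_of_abs_lt h₃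
  exact ⟨n₁, n₂, n₃, n₄, n₅, n₆, hn₁, hn₂, hn₃, hn₄, hn₅, hn₆, by linear_combination e₁ + e₂ + e₃⟩

theorem sum_six_pos_cubes (p c₁ c₂ c₃ : ℤ) (X₁ X₂ X₃ : ℤ)
    (hp : 0 < p) (hc₁ : 0 < c₁) (hc₂ : 0 < c₂) (hc₃ : 0 < c₃)
    (h₁ : |X₁| < c₁ * p) (h₂ : |X₂| < c₂ * p) (h₃ : |X₃| < c₃ * p) :
    ∃ n₁ n₂ n₃ n₄ n₅ n₆ : ℤ, 0 < n₁ ∧ 0 < n₂ ∧ 0 < n₃ ∧ 0 < n₄ ∧ 0 < n₅ ∧ 0 < n₆ ∧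
      n₁^3 + n₂^3 + n₃^3 + n₄^3 + n₅^3 + n₆^3 =
        2 * (c₁^3 + c₂^3 + c₃^3) * p^3 + 6 * p * (c₁*X₁^2 + c₂*X₂^2 + c₃*X₃^2) :=
  sum_six_pos_cubes_general p c₁ c₂ c₃ X₁ X₂ X₃ h₁ h₂ h₃
end

section
/- If N ≡ 4 (mod 8), p is an odd integer, β is an odd integer, and x₀ is an even integer, then (N − x₀³ − 688(βp)³)/4 is an integer not congruent to N/4 modulo 8. -/
/-! Write `s = x₀³ + 688 (βp)³`. Since `4 ∣ N` and `4 ∣ s`, the two quarters `(N - s)/4` and `N/4`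
differ by `s/4`, so they are congruent modulo 8 exactly when `32 ∣ s`. But modulo 32 an even cube
is `0`, `8` or `24`, never `16`, while `688 (βp)³ ≡ 16` because `βp` is odd and `688 ≡ 16`. -/

namespace Int

theorem not_cube_modEq_sixteen_of_even {x : ℤ} (hx : Even x) : ¬ x ^ 3 ≡ 16 [ZMOD 32] := by
  obtain ⟨k, rfl⟩ := hx
  refine (ZMod.intCast_eq_intCast_iff _ _ 32).not.mp ?_
  push_cast
  generalize (k : ZMod 32) = k
  revert k
  decide

theorem mul_cube_modEq_sixteen_of_odd {c y : ℤ} (hc : c ≡ 16 [ZMOD 32]) (hy : Odd y) :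
    c * y ^ 3 ≡ 16 [ZMOD 32] := by
  obtain ⟨m, rfl⟩ := hy
  replace hc := (ZMod.intCast_eq_intCast_iff _ _ 32).mpr hc
  refine (ZMod.intCast_eq_intCast_iff _ _ 32).mp ?_
  push_cast at hc ⊢
  rw [hc]
  generalize (m : ZMod 32) = m
  revert m
  decide

theorem not_dvd_cube_add_mul_cube {c x y : ℤ} (hc : c ≡ 16 [ZMOD 32]) (hx : Even x)
    (hy : Odd y) : ¬ 32 ∣ x ^ 3 + c * y ^ 3 := by
  intro h
  apply not_cube_modEq_sixteen_of_even hx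
  have := (Int.modEq_zero_iff_dvd.mpr h).sub_right (c * y ^ 3)
  simp only [add_sub_cancel_right, zero_sub] at this
  exact this.trans ((mul_cube_modEq_sixteen_of_odd hc hy).neg.trans (by decide))

theorem four_dvd_cube_of_even {x : ℤ} (hx : Even x) : 4 ∣ x ^ 3 := by
  obtain ⟨k, rfl⟩ := hx
  exact ⟨2 * k ^ 3, by ring⟩

theorem sub_ediv_four_modEq_ediv_four_iff {a b : ℤ} (ha : 4 ∣ a) (hb : 4 ∣ b) :
    (a - b) / 4 ≡ a / 4 [ZMOD 8] ↔ 32 ∣ b := by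
  obtain ⟨a, rfl⟩ := ha
  obtain ⟨b, rfl⟩ := hb
  rw [← mul_sub, Int.mul_ediv_cancel_left _ four_ne_zero, Int.mul_ediv_cancel_left _ four_ne_zero,
    show (32 : ℤ) = 4 * 8 by norm_num, Int.mul_dvd_mul_iff_left four_ne_zero]
  constructor
  · intro h
    simpa using (h.sub_right a).symm.dvd
  · intro h
    exact (Int.modEq_iff_dvd.mpr (by simpa using h)).symm

end Int

theorem mod8_condition (N p β x₀ : ℤ) (hN : N ≡ 4 [ZMOD 8]) (hp : Odd p)
    (hβ : Odd β) (hx₀ : Even x₀) :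
    4 ∣ (N - x₀^3 - 688*(β*p)^3) ∧
    ¬ ((N - x₀^3 - 688*(β*p)^3)/4 ≡ N/4 [ZMOD 8]) := by
  have hN4 : 4 ∣ N := by
    have := hN.dvd
    omega
  have hs4 : 4 ∣ x₀ ^ 3 + 688 * (β * p) ^ 3 :=
    (Int.four_dvd_cube_of_even hx₀).add (dvd_mul_of_dvd_left (by norm_num) _)
  rw [sub_sub]
  exact ⟨hN4.sub hs4, (Int.sub_ediv_four_modEq_ediv_four_iff hN4 hs4).not.mpr
    (Int.not_dvd_cube_add_mul_cube (by decide) hx₀ (hβ.mul hp))⟩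
end

section
/- The only representations of 2408 as a sum of at most seven positive cubes, up to permutation, are 10³+10³+7³+4³+1³, 12³+8³+5³+3³+2³+2³, 11³+8³+6³+6³+5³+2³, and 10³+10³+6³+4³+4³+4³; in particular, 2408 is not the sum of exactly seven positive cubes. -/
/-! Every part of a representation of 2408 as a sum of cubes is at most 13, since 14³ > 2408.
Listing the parts in nondecreasing order therefore leaves a finite search, which finds exactly
four representations with at most seven parts, none of them with seven. -/

/-- Nondecreasing lists of length at most `k`, with entries in `[lo, b]`, whose `e`-th powers sum
to `t`. -/
def sortedPowSums (e b : ℕ) : ℕ → ℕ → ℕ → List (List ℕ)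
  | _, 0, t => if t = 0 then [[]] else []
  | lo, k + 1, t =>
    (if t = 0 then [[]] else []) ++
    (List.range' lo (b + 1 - lo)).flatMap fun a =>
      if a ^ e ≤ t then (sortedPowSums e b a k (t - a ^ e)).map (a :: ·) else []

theorem mem_sortedPowSums (e b : ℕ) :
    ∀ (k lo : ℕ) (l : List ℕ), l.Pairwise (· ≤ ·) → (∀ x ∈ l, lo ≤ x ∧ x ≤ b) →
      l.length ≤ k → l ∈ sortedPowSums e b lo k (l.map (· ^ e)).sum := by
  intro k
  induction k with
  | zero =>
    intro lo l _ _ hlen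
    rw [List.length_eq_zero_iff.mp (Nat.le_zero.mp hlen)]
    simp [sortedPowSums]
  | succ k ih =>
    rintro lo (_ | ⟨a, l⟩) hsort hbound hlen
    · simp [sortedPowSums]
    · obtain ⟨ha_le, hsort'⟩ := List.pairwise_cons.mp hsort
      obtain ⟨hlo, hb⟩ := hbound a List.mem_cons_self
      have htail : l ∈ sortedPowSums e b a k (l.map (· ^ e)).sum :=
        ih a l hsort' (fun x hx => ⟨ha_le x hx, (hbound x (List.mem_cons_of_mem a hx)).2⟩)
          (by simpa using hlen)
      rw [sortedPowSums]
      refine List.mem_append_right _ (List.mem_flatMap.mpr ⟨a, ?_, ?_⟩)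
      · rw [List.mem_range'_1]
        omega
      · simpa using htail

theorem Multiset.exists_mem_sortedPowSums (e b k : ℕ) (s : Multiset ℕ) (hcard : s.card ≤ k)
    (hbound : ∀ n ∈ s, 0 < n ∧ n ≤ b) :
    ∃ l ∈ sortedPowSums e b 1 k (s.map (· ^ e)).sum, s = ↑l := by
  refine ⟨s.sort (· ≤ ·), ?_, (s.sort_eq _).symm⟩
  have h := mem_sortedPowSums e b k 1 (s.sort (· ≤ ·)) (s.pairwise_sort _)
    (fun x hx => hbound x ((s.mem_sort _).mp hx)) (by simpa using hcard)
  rwa [← Multiset.sum_coe, ← Multiset.map_coe, s.sort_eq] at h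

theorem Multiset.le_of_mem_of_sum_pow_lt {e b : ℕ} {s : Multiset ℕ}
    (hsum : (s.map (· ^ e)).sum < (b + 1) ^ e) {n : ℕ} (hn : n ∈ s) : n ≤ b := by
  by_contra! h
  have hle : n ^ e ≤ (s.map (· ^ e)).sum :=
    Multiset.le_sum_of_mem (Multiset.mem_map_of_mem (· ^ e) hn)
  have : (b + 1) ^ e ≤ n ^ e := Nat.pow_le_pow_left h e
  omega

theorem sortedPowSums_three_13_1_7_2408 :
    sortedPowSums 3 13 1 7 2408 =
      [[1, 4, 7, 10, 10], [2, 2, 3, 5, 8, 12], [2, 5, 6, 6, 8, 11], [4, 4, 4, 6, 10, 10]] := by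
  decide

theorem eq_of_sum_cubes_eq_2408 (s : Multiset ℕ) (hcard : s.card ≤ 7) (hpos : ∀ n ∈ s, 0 < n)
    (hsum : (s.map (· ^ 3)).sum = 2408) :
    s = {10, 10, 7, 4, 1} ∨ s = {12, 8, 5, 3, 2, 2} ∨
      s = {11, 8, 6, 6, 5, 2} ∨ s = {10, 10, 6, 4, 4, 4} := by
  obtain ⟨l, hl, rfl⟩ := s.exists_mem_sortedPowSums 3 13 7 hcard
    fun n hn => ⟨hpos n hn, Multiset.le_of_mem_of_sum_pow_lt (e := 3) (by omega) hn⟩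
  rw [hsum, sortedPowSums_three_13_1_7_2408] at hl
  simp only [List.mem_cons, List.not_mem_nil, or_false] at hl
  rcases hl with rfl | rfl | rfl | rfl <;> decide

theorem repr_2408 :
    (∀ s : Multiset ℕ, s.card ≤ 7 → (∀ n ∈ s, 0 < n) →
      (s.map (fun n => n^3)).sum = 2408 →
      s = {10, 10, 7, 4, 1} ∨ s = {12, 8, 5, 3, 2, 2} ∨
      s = {11, 8, 6, 6, 5, 2} ∨ s = {10, 10, 6, 4, 4, 4}) ∧
    ¬ ∃ n₁ n₂ n₃ n₄ n₅ n₆ n₇ : ℕ, 0 < n₁ ∧ 0 < n₂ ∧ 0 < n₃ ∧ 0 < n₄ ∧ 0 < n₅ ∧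
      0 < n₆ ∧ 0 < n₇ ∧ n₁^3 + n₂^3 + n₃^3 + n₄^3 + n₅^3 + n₆^3 + n₇^3 = 2408 := by
  refine ⟨eq_of_sum_cubes_eq_2408, ?_⟩
  rintro ⟨a, b, c, d, e, f, g, ha, hb, hc, hd, he, hf, hg, hsum⟩
  have hcard : ({a, b, c, d, e, f, g} : Multiset ℕ).card = 7 := by simp
  rcases eq_of_sum_cubes_eq_2408 {a, b, c, d, e, f, g} hcard.le (by simp [*]) (by simp; omega)
    with h | h | h | h <;> rw [h] at hcard <;> simp at hcard
end
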